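/- Let c ∈ (0,1). The function f₃(r) = arctan( c·r / (1 − c·√(1−r²)) ) − arsinh( 2·c·r / (1−c²) ) is strictly decreasing on (0,1), with limit 0 as r → 0⁺ and limit arctan(c) − log((1+c)/(1−c)) as r → 1⁻; in particular f₃(r) < 0 for all r ∈ (0,1). -/

import Mathlib

/-!
With `s = √(1 - r²)`, the derivatives of the two terms of `f₃` are
`c (s - c) / (s (1 + c² - 2cs))` and `2c / √((1 + c²)² - (2cs)²)`. Squaring reduces their
comparison to the polynomial inequality `(s - c)² (1 + c² + 2cs) < 4 s² (1 + c² - 2cs)` for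
`c < s < 1` (for `s ≤ c` the first derivative is not even positive), so `f₃` is strictly
decreasing on `[0, 1]`. Being continuous there, its one-sided limits are its values
`f₃ 0 = 0` and `f₃ 1 = arctan c - log ((1 + c) / (1 - c))`, and `f₃ r < f₃ 0 = 0`.
-/

open Real Set Filter

noncomputable def arctanSubArsinh (c r : ℝ) : ℝ :=
  arctan (c * r / (1 - c * √(1 - r ^ 2))) - arsinh (2 * c * r / (1 - c ^ 2))

lemma one_sub_mul_sqrt_one_sub_sq_pos {c : ℝ} (hc : c < 1) (x : ℝ) :
    0 < 1 - c * √(1 - x ^ 2) := by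
  have hs : √(1 - x ^ 2) ≤ 1 := sqrt_le_one.mpr (by nlinarith)
  rcases le_total c 0 with h | h <;> nlinarith [sqrt_nonneg (1 - x ^ 2)]

lemma continuous_arctanSubArsinh {c : ℝ} (hc : c < 1) : Continuous (arctanSubArsinh c) :=
  (continuous_arctan.comp <| (continuous_const_mul c).div (by fun_prop)
    fun x => (one_sub_mul_sqrt_one_sub_sq_pos hc x).ne').sub
    (continuous_arsinh.comp <| by fun_prop)

lemma hasDerivAt_arctan_mul_div_one_sub_mul_sqrt {c r : ℝ} (hc : c < 1) (hr : r ^ 2 < 1) :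
    HasDerivAt (fun x => arctan (c * x / (1 - c * √(1 - x ^ 2))))
      (c * (√(1 - r ^ 2) - c) / (√(1 - r ^ 2) * (1 + c ^ 2 - 2 * c * √(1 - r ^ 2)))) r := by
  have hD := one_sub_mul_sqrt_one_sub_sq_pos hc r
  have hs : 0 < √(1 - r ^ 2) := sqrt_pos.2 (by linarith)
  have hs2 : √(1 - r ^ 2) ^ 2 = 1 - r ^ 2 := sq_sqrt (by linarith)
  have hsqrt : HasDerivAt (fun x => √(1 - x ^ 2)) (-r / √(1 - r ^ 2)) r := by
    convert ((hasDerivAt_pow 2 r).const_sub 1).sqrt (by linarith) using 1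
    field_simp; ring
  have hquot := ((hasDerivAt_id' r).const_mul c).fun_div ((hsqrt.const_mul c).const_sub 1) hD.ne'
  convert hquot.arctan using 1
  have hA : (1 - c * √(1 - r ^ 2)) ^ 2 + (c * r) ^ 2 = 1 + c ^ 2 - 2 * c * √(1 - r ^ 2) := by
    linear_combination c ^ 2 * hs2
  have hApos : 0 < 1 + c ^ 2 - 2 * c * √(1 - r ^ 2) := hA ▸ by positivity
  field_simp
  rw [div_eq_iff (by linarith)]
  linear_combination (c ^ 3 * (√(1 - r ^ 2) - c) + c ^ 2 * (1 + c ^ 2 - 2 * c * √(1 - r ^ 2))) * hs2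

lemma hasDerivAt_arsinh_two_mul_div_one_sub_sq {c : ℝ} (hc : c ^ 2 < 1) (r : ℝ) :
    HasDerivAt (fun x => arsinh (2 * c * x / (1 - c ^ 2)))
      (2 * c / √((1 - c ^ 2) ^ 2 + (2 * c * r) ^ 2)) r := by
  have hc' : 0 < 1 - c ^ 2 := by linarith
  convert (((hasDerivAt_id' r).const_mul (2 * c)).div_const (1 - c ^ 2)).arsinh using 1
  rw [smul_eq_mul, show 1 + (2 * c * r / (1 - c ^ 2)) ^ 2 =
      ((1 - c ^ 2) ^ 2 + (2 * c * r) ^ 2) / (1 - c ^ 2) ^ 2 by field_simp,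
    sqrt_div' _ (by positivity), sqrt_sq hc'.le]
  field_simp

lemma sq_sub_mul_lt_four_mul_sq_mul {c s : ℝ} (hc0 : 0 < c) (hcs : c < s) (hs1 : s < 1) :
    (s - c) ^ 2 * (1 + c ^ 2 + 2 * c * s) < 4 * s ^ 2 * (1 + c ^ 2 - 2 * c * s) := by
  nlinarith [mul_pos (sub_pos.2 hcs) (sub_pos.2 hs1), mul_pos hc0 (sub_pos.2 hcs),
    mul_pos (mul_pos hc0 hc0) (sub_pos.2 hs1), sq_nonneg (s * c - 1)]

lemma mul_sub_div_lt_two_mul_div_sqrt {c s : ℝ} (hc0 : 0 < c) (hs0 : 0 < s)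
    (hs1 : s < 1) :
    c * (s - c) / (s * (1 + c ^ 2 - 2 * c * s)) < 2 * c / √((1 + c ^ 2) ^ 2 - (2 * c * s) ^ 2) := by
  have hA : 0 < 1 + c ^ 2 - 2 * c * s := by nlinarith [sq_nonneg (c - s)]
  have hAB : (1 + c ^ 2) ^ 2 - (2 * c * s) ^ 2 =
      (1 + c ^ 2 - 2 * c * s) * (1 + c ^ 2 + 2 * c * s) := by ring
  rw [hAB]
  have hrhs : 0 < 2 * c / √((1 + c ^ 2 - 2 * c * s) * (1 + c ^ 2 + 2 * c * s)) := by positivity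
  rcases le_or_gt s c with hsc | hcs
  · exact lt_of_le_of_lt (div_nonpos_of_nonpos_of_nonneg
      (mul_nonpos_of_nonneg_of_nonpos hc0.le (by linarith)) (by positivity)) hrhs
  refine lt_of_pow_lt_pow_left₀ 2 hrhs.le ?_
  rw [div_pow, div_pow, sq_sqrt (by positivity), div_lt_div_iff₀ (by positivity) (by positivity)]
  linear_combination (c ^ 2 * (1 + c ^ 2 - 2 * c * s)) * sq_sub_mul_lt_four_mul_sq_mul hc0 hcs hs1

lemma strictAntiOn_arctanSubArsinh {c : ℝ} (hc0 : 0 < c) (hc1 : c < 1) :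
    StrictAntiOn (arctanSubArsinh c) (Icc 0 1) := by
  refine strictAntiOn_of_hasDerivWithinAt_neg (convex_Icc 0 1)
    (continuous_arctanSubArsinh hc1).continuousOn
    (f' := fun r => c * (√(1 - r ^ 2) - c) / (√(1 - r ^ 2) * (1 + c ^ 2 - 2 * c * √(1 - r ^ 2))) -
      2 * c / √((1 - c ^ 2) ^ 2 + (2 * c * r) ^ 2)) ?_ ?_ <;> rw [interior_Icc]
  · rintro r ⟨hr0, hr1⟩
    exact ((hasDerivAt_arctan_mul_div_one_sub_mul_sqrt hc1 (by nlinarith)).sub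
      (hasDerivAt_arsinh_two_mul_div_one_sub_sq (by nlinarith) r)).hasDerivWithinAt
  · rintro r ⟨hr0, hr1⟩
    have hs2 : √(1 - r ^ 2) ^ 2 = 1 - r ^ 2 := sq_sqrt (by nlinarith)
    rw [sub_neg, show (1 - c ^ 2) ^ 2 + (2 * c * r) ^ 2 =
      (1 + c ^ 2) ^ 2 - (2 * c * √(1 - r ^ 2)) ^ 2 by linear_combination 4 * c ^ 2 * hs2]
    exact mul_sub_div_lt_two_mul_div_sqrt hc0 (sqrt_pos.2 (by nlinarith))
      ((sqrt_lt' one_pos).2 (by nlinarith))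

lemma arsinh_two_mul_div_one_sub_sq {c : ℝ} (hc₀ : -1 < c) (hc₁ : c < 1) :
    arsinh (2 * c / (1 - c ^ 2)) = log ((1 + c) / (1 - c)) := by
  have h₀ : 0 < 1 + c := by linarith
  have h₁ : 0 < 1 - c := by linarith
  have h₂ : 1 - c ^ 2 ≠ 0 := by nlinarith
  rw [← arsinh_sinh (log _), sinh_log (by positivity)]
  congr 1
  field_simp
  ring

lemma arctanSubArsinh_zero (c : ℝ) : arctanSubArsinh c 0 = 0 := by
  simp [arctanSubArsinh]

lemma arctanSubArsinh_one {c : ℝ} (hc₀ : -1 < c) (hc₁ : c < 1) :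
    arctanSubArsinh c 1 = arctan c - log ((1 + c) / (1 - c)) := by
  simp [arctanSubArsinh, arsinh_two_mul_div_one_sub_sq hc₀ hc₁]

theorem stmt15 (c : ℝ) (hc : c ∈ Set.Ioo (0 : ℝ) 1) (f : ℝ → ℝ)
    (hf : ∀ r : ℝ, f r =
      Real.arctan (c * r / (1 - c * Real.sqrt (1 - r ^ 2))) -
        Real.arsinh (2 * c * r / (1 - c ^ 2))) :
    StrictAntiOn f (Set.Ioo 0 1) ∧
    Filter.Tendsto f (nhdsWithin 0 (Set.Ioi 0)) (nhds 0) ∧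
    Filter.Tendsto f (nhdsWithin 1 (Set.Iio 1))
      (nhds (Real.arctan c - Real.log ((1 + c) / (1 - c)))) ∧
    ∀ r ∈ Set.Ioo (0 : ℝ) 1, f r < 0 := by
  obtain ⟨hc0, hc1⟩ := hc
  obtain rfl : f = arctanSubArsinh c := funext hf
  have hanti := strictAntiOn_arctanSubArsinh hc0 hc1
  have hcont := continuous_arctanSubArsinh hc1
  refine ⟨hanti.mono Ioo_subset_Icc_self, ?_, ?_, fun r hr => ?_⟩
  · simpa only [arctanSubArsinh_zero] using (hcont.continuousWithinAt (x := 0)).tendsto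
  · simpa only [arctanSubArsinh_one (by linarith) hc1] using
      (hcont.continuousWithinAt (x := 1)).tendsto
  · rw [← arctanSubArsinh_zero c]
    exact hanti (left_mem_Icc.2 zero_le_one) (Ioo_subset_Icc_self hr) hr.1
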